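/- The group G has exactly 17 conjugacy classes. Specifically: the conjugacy class of the identity I is {I}; the conjugacy class of −I is {−I}; for each m ∈ {0,…,4} the conjugacy class of T_m is {T_m, −T_m}; and for each pair 0 ≤ m < n ≤ 4 the conjugacy class of R_{mn} = T_m T_n is {R_{mn}, −R_{mn}}. -/

import Mathlib

/-!
The matrices `T m` are pairwise anticommuting involutions and `T 4 = T 0 * T 1 * T 2 * T 3`, so `G`
consists of the 32 signed monomials `± T 0 ^ a * T 1 ^ b * T 2 ^ c * T 3 ^ d`, the extraspecial
group `2^{1+4}`. A model of it by sign/exponent vectors maps onto `G`, and injectively because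
every nontrivial normal subgroup of the model contains the central element `-1`, which goes to
`-I ≠ I`. In the model conjugacy is decided by computation: the centre is `{1, -1}` and every other
`x` is conjugate exactly to `x` and `-x`, giving `2 + 30 / 2 = 17` classes.
-/

open Matrix Complex

noncomputable def T : Fin 5 → Matrix (Fin 4) (Fin 4) ℂ :=
  ![!![1,0,0,0; 0,-1,0,0; 0,0,1,0; 0,0,0,-1],
    !![0,I,0,0; -I,0,0,0; 0,0,0,-I; 0,0,I,0],
    !![0,1,0,0; 1,0,0,0; 0,0,0,1; 0,0,1,0],
    !![0,0,0,1; 0,0,-1,0; 0,-1,0,0; 1,0,0,0],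
    !![0,0,0,I; 0,0,-I,0; 0,I,0,0; -I,0,0,0]]

/-- The subgroup of `GL(4,ℂ)` generated by `T 0, …, T 4`. -/
noncomputable def Ggrp : Subgroup ((Matrix (Fin 4) (Fin 4) ℂ)ˣ) :=
  Subgroup.closure {g | ∃ m : Fin 5, (g : Matrix (Fin 4) (Fin 4) ℂ) = T m}

/-- The underlying matrix of an element of `G`. -/
noncomputable def mat (v : Ggrp) : Matrix (Fin 4) (Fin 4) ℂ :=
  ((v : (Matrix (Fin 4) (Fin 4) ℂ)ˣ) : Matrix (Fin 4) (Fin 4) ℂ)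

theorem MulEquiv.isConj_iff {α β : Type*} [Monoid α] [Monoid β] (e : α ≃* β) {a b : α} :
    IsConj (e a) (e b) ↔ IsConj a b :=
  ⟨fun h => by simpa using e.symm.toMonoidHom.map_isConj h, e.toMonoidHom.map_isConj⟩

theorem MulEquiv.setOf_isConj {α β : Type*} [Monoid α] [Monoid β] (e : α ≃* β) (a : α) :
    {b | IsConj (e a) b} = e '' {b | IsConj a b} := by
  ext b
  rw [← e.apply_symm_apply b, Set.mem_ofPred_eq, e.isConj_iff, e.apply_symm_apply]
  exact ⟨fun h => ⟨_, h, e.apply_symm_apply b⟩, by rintro ⟨c, hc, rfl⟩; simpa using hc⟩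

def MulEquiv.conjClassesCongr {α β : Type*} [Monoid α] [Monoid β] (e : α ≃* β) :
    ConjClasses α ≃ ConjClasses β :=
  Quotient.congr e.toEquiv fun _ _ => e.isConj_iff.symm

theorem pow_val_add_of_mul_self_eq_one {M : Type*} [Monoid M] {g : M} (hg : g * g = 1)
    (a b : ZMod 2) : g ^ (a + b).val = g ^ a.val * g ^ b.val := by
  rw [ZMod.val_add, ← pow_add, ← Nat.mod_add_div (a.val + b.val) 2]
  simp [pow_add, pow_mul, pow_two, hg]

/-- `⟨s, a, b, c, d⟩` stands for `(-1) ^ s * e₀ ^ a * e₁ ^ b * e₂ ^ c * e₃ ^ d`, where the `eᵢ` are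
anticommuting involutions. The extra sign in a product counts the transpositions needed to move
each `eᵢ` of the left factor past the `eⱼ`, `j < i`, of the right factor. -/
@[ext]
structure CliffordMonomial where
  s : ZMod 2
  a : ZMod 2
  b : ZMod 2
  c : ZMod 2
  d : ZMod 2
deriving DecidableEq, Fintype

namespace CliffordMonomial

instance : Mul CliffordMonomial :=
  ⟨fun x y => ⟨x.s + y.s + (x.b * y.a + x.c * (y.a + y.b) + x.d * (y.a + y.b + y.c)),
    x.a + y.a, x.b + y.b, x.c + y.c, x.d + y.d⟩⟩

instance : One CliffordMonomial := ⟨⟨0, 0, 0, 0, 0⟩⟩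

instance : Inv CliffordMonomial :=
  ⟨fun x => ⟨x.s + (x.b * x.a + x.c * (x.a + x.b) + x.d * (x.a + x.b + x.c)), x.a, x.b, x.c, x.d⟩⟩

theorem mul_def (x y : CliffordMonomial) : x * y =
    ⟨x.s + y.s + (x.b * y.a + x.c * (y.a + y.b) + x.d * (y.a + y.b + y.c)),
      x.a + y.a, x.b + y.b, x.c + y.c, x.d + y.d⟩ := rfl

theorem one_def : (1 : CliffordMonomial) = ⟨0, 0, 0, 0, 0⟩ := rfl

instance : Group CliffordMonomial where
  mul_assoc x y z := by ext <;> simp only [mul_def] <;> ring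
  one_mul := by decide +kernel
  mul_one := by decide +kernel
  inv_mul_cancel := by decide +kernel

instance : DecidableRel (IsConj : CliffordMonomial → CliffordMonomial → Prop) :=
  fun _ _ => decidable_of_iff _ isConj_iff.symm

def negOne : CliffordMonomial := ⟨1, 0, 0, 0, 0⟩

def gen : Fin 5 → CliffordMonomial :=
  ![⟨0, 1, 0, 0, 0⟩, ⟨0, 0, 1, 0, 0⟩, ⟨0, 0, 0, 1, 0⟩, ⟨0, 0, 0, 0, 1⟩, ⟨0, 1, 1, 1, 1⟩]

theorem gen_four : gen 4 = gen 0 * gen 1 * gen 2 * gen 3 := by decide +kernel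

theorem negOne_eq : negOne = (gen 0 * gen 1) ^ 2 := by decide +kernel

theorem eq_negOne_pow_mul_gen_pow (x : CliffordMonomial) : x =
    negOne ^ x.s.val * gen 0 ^ x.a.val * gen 1 ^ x.b.val * gen 2 ^ x.c.val * gen 3 ^ x.d.val := by
  revert x; decide +kernel

theorem closure_range_gen_castSucc :
    Submonoid.closure (Set.range fun k : Fin 4 => gen k.castSucc) = ⊤ := by
  set S := Submonoid.closure (Set.range fun k : Fin 4 => gen k.castSucc)
  have hgen (k : Fin 4) : gen k.castSucc ∈ S := Submonoid.subset_closure ⟨k, rfl⟩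
  refine eq_top_iff.mpr fun x _ => ?_
  rw [eq_negOne_pow_mul_gen_pow x, negOne_eq]
  exact mul_mem (mul_mem (mul_mem (mul_mem (pow_mem (pow_mem (mul_mem (hgen 0) (hgen 1)) _) _)
    (pow_mem (hgen 0) _)) (pow_mem (hgen 1) _)) (pow_mem (hgen 2) _)) (pow_mem (hgen 3) _)

theorem closure_range_gen : Subgroup.closure (Set.range gen) = ⊤ := by
  refine eq_top_iff.mpr fun x _ => ?_
  have hx := closure_range_gen_castSucc ▸ Submonoid.mem_top x
  refine Submonoid.closure_le.mpr ?_ hx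
  rintro _ ⟨k, rfl⟩
  exact Subgroup.subset_closure ⟨_, rfl⟩

theorem mul_negOne_comm : ∀ c : CliffordMonomial, c * negOne = negOne * c := by decide +kernel

theorem conj_eq_or_eq_negOne_mul :
    ∀ c x : CliffordMonomial, c * x * c⁻¹ = x ∨ c * x * c⁻¹ = negOne * x := by
  decide +kernel

theorem exists_conj_eq_negOne_mul :
    ∀ x : CliffordMonomial, x ≠ 1 → x ≠ negOne → ∃ c, c * x * c⁻¹ = negOne * x := by
  decide +kernel

theorem setOf_isConj_negOne : {y | IsConj negOne y} = {negOne} := by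
  ext y
  simp only [Set.mem_ofPred_eq, Set.mem_singleton_iff, isConj_iff, mul_negOne_comm,
    mul_inv_cancel_right, exists_const, eq_comm]

theorem setOf_isConj_of_ne {x : CliffordMonomial} (h1 : x ≠ 1) (hneg : x ≠ negOne) :
    {y | IsConj x y} = {x, negOne * x} := by
  obtain ⟨c, hc⟩ := exists_conj_eq_negOne_mul x h1 hneg
  ext y
  simp only [Set.mem_ofPred_eq, Set.mem_insert_iff, Set.mem_singleton_iff, isConj_iff]
  constructor
  · rintro ⟨d, rfl⟩
    exact conj_eq_or_eq_negOne_mul d x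
  · rintro (rfl | rfl)
    exacts [⟨1, by group⟩, ⟨c, hc⟩]

theorem gen_ne : ∀ m, gen m ≠ 1 ∧ gen m ≠ negOne := by decide +kernel

theorem gen_mul_gen_ne : ∀ {m n}, m ≠ n → gen m * gen n ≠ 1 ∧ gen m * gen n ≠ negOne := by
  decide +kernel

theorem card_conjClasses : Nat.card (ConjClasses CliffordMonomial) = 17 := by
  rw [Nat.card_eq_fintype_card]; decide +kernel

theorem injective_of_map_negOne_ne_one {H : Type*} [Group H] (f : CliffordMonomial →* H)
    (hf : f negOne ≠ 1) : Function.Injective f := by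
  refine (injective_iff_map_eq_one f).mpr fun x hx => ?_
  by_contra h1
  by_cases hneg : x = negOne
  · exact hf (hneg ▸ hx)
  obtain ⟨c, hc⟩ := exists_conj_eq_negOne_mul x h1 hneg
  apply hf
  simpa [hx, eq_comm] using congrArg f hc

section Eval

variable {R : Type*} [Ring R] {t : Fin 4 → R}

def eval (t : Fin 4 → R) (x : CliffordMonomial) : R :=
  (-1) ^ x.s.val * t 0 ^ x.a.val * t 1 ^ x.b.val * t 2 ^ x.c.val * t 3 ^ x.d.val

theorem eval_one : eval t 1 = 1 := by
  simp [eval, one_def]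

theorem mul_pow_of_anticomm {x y : R} (hxy : x * y = -(y * x)) (n : ℕ) :
    x * y ^ n = (-1) ^ n * y ^ n * x := by
  induction n with
  | zero => simp
  | succ n ih =>
    rw [pow_succ', ← mul_assoc, hxy, neg_mul, mul_assoc, ih, ← mul_assoc, ← mul_assoc,
      ← ((Commute.neg_one_left y).pow_left n).eq, pow_succ']
    noncomm_ring

theorem mul_neg_one_pow_mul (y x : R) (n : ℕ) : y * ((-1) ^ n * x) = (-1) ^ n * (y * x) := by
  rw [← mul_assoc, ((Commute.neg_one_right y).pow_right n).eq, mul_assoc]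

theorem eval_gen_mul (hsq : ∀ i, t i * t i = 1) (hanti : ∀ i j, j < i → t i * t j = -(t j * t i))
    (k : Fin 4) (y : CliffordMonomial) : eval t (gen k.castSucc * y) = t k * eval t y := by
  have hneg : (-1 : R) * (-1) = 1 := by simp
  have hmove {i j : Fin 4} (hji : j < i) (n : ℕ) (x : R) :
      t i * (t j ^ n * x) = (-1) ^ n * (t j ^ n * (t i * x)) := by
    rw [← mul_assoc, mul_pow_of_anticomm (hanti i j hji), mul_assoc, mul_assoc]
  fin_cases k <;>
    simp [gen, eval, mul_def, pow_val_add_of_mul_self_eq_one hneg,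
      pow_val_add_of_mul_self_eq_one (hsq _), ZMod.val_one, mul_assoc, hmove,
      mul_neg_one_pow_mul (t _), mul_neg_one_pow_mul (t _ ^ _)]

theorem eval_gen (hsq : ∀ i, t i * t i = 1) (hanti : ∀ i j, j < i → t i * t j = -(t j * t i))
    (k : Fin 4) : eval t (gen k.castSucc) = t k := by
  rw [← mul_one (gen _), eval_gen_mul hsq hanti, eval_one, mul_one]

theorem eval_mul (hsq : ∀ i, t i * t i = 1) (hanti : ∀ i j, j < i → t i * t j = -(t j * t i))
    (x y : CliffordMonomial) : eval t (x * y) = eval t x * eval t y := by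
  let S : Submonoid CliffordMonomial :=
    { carrier := {g | ∀ y, eval t (g * y) = eval t g * eval t y}
      one_mem' := fun y => by simp [eval_one]
      mul_mem' := fun {g h} hg hh y => by rw [mul_assoc, hg, hh, hg, mul_assoc] }
  have hS : Submonoid.closure (Set.range fun k : Fin 4 => gen k.castSucc) ≤ S := by
    rw [Submonoid.closure_le]
    rintro _ ⟨k, rfl⟩ y
    rw [eval_gen_mul hsq hanti, eval_gen hsq hanti]
  exact hS (closure_range_gen_castSucc ▸ Submonoid.mem_top x) y

def lift (hsq : ∀ i, t i * t i = 1) (hanti : ∀ i j, j < i → t i * t j = -(t j * t i)) :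
    CliffordMonomial →* R where
  toFun := eval t
  map_one' := eval_one
  map_mul' := eval_mul hsq hanti

end Eval

end CliffordMonomial

open CliffordMonomial

theorem T_mul_self (m : Fin 5) : T m * T m = 1 := by
  fin_cases m <;> simp [T, ← Matrix.ext_iff, Fin.forall_fin_succ, Matrix.one_apply]

theorem T_anticomm {m n : Fin 5} (h : m ≠ n) : T m * T n = -(T n * T m) := by
  fin_cases m <;> fin_cases n <;> simp at h <;> simp [T]

theorem T_four : T 4 = T 0 * T 1 * T 2 * T 3 := by
  simp [T]

theorem T_castSucc_anticomm {i j : Fin 4} (h : j < i) :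
    T i.castSucc * T j.castSucc = -(T j.castSucc * T i.castSucc) :=
  T_anticomm (Fin.castSucc_lt_castSucc_iff.mpr h).ne'

noncomputable def toGL : CliffordMonomial →* (Matrix (Fin 4) (Fin 4) ℂ)ˣ :=
  (lift (fun i => T_mul_self i.castSucc) fun _ _ => T_castSucc_anticomm).toHomUnits

theorem coe_toGL (x : CliffordMonomial) :
    (toGL x : Matrix (Fin 4) (Fin 4) ℂ) = eval (fun i => T i.castSucc) x := rfl

theorem coe_toGL_negOne : (toGL negOne : Matrix (Fin 4) (Fin 4) ℂ) = -1 := by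
  simp [coe_toGL, eval, negOne, ZMod.val_one]

theorem coe_toGL_gen (m : Fin 5) : (toGL (gen m) : Matrix (Fin 4) (Fin 4) ℂ) = T m := by
  have hcast (k : Fin 4) : (toGL (gen k.castSucc) : Matrix (Fin 4) (Fin 4) ℂ) = T k.castSucc :=
    eval_gen (fun i => T_mul_self i.castSucc) (fun _ _ => T_castSucc_anticomm) k
  induction m using Fin.lastCases with
  | cast k => exact hcast k
  | last =>
    calc (toGL (gen 4) : Matrix (Fin 4) (Fin 4) ℂ)
        = toGL (gen (Fin.castSucc 0)) * toGL (gen (Fin.castSucc 1)) *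
            toGL (gen (Fin.castSucc 2)) * toGL (gen (Fin.castSucc 3)) := by
          rw [gen_four]; simp only [map_mul, Units.val_mul]; rfl
      _ = T 4 := by rw [hcast, hcast, hcast, hcast, T_four]; rfl

theorem toGL_injective : Function.Injective toGL := by
  refine injective_of_map_negOne_ne_one _ fun h => ?_
  have := congrArg (fun g : (Matrix (Fin 4) (Fin 4) ℂ)ˣ => (g : Matrix (Fin 4) (Fin 4) ℂ) 0 0) h
  norm_num [coe_toGL_negOne] at this

theorem range_toGL : toGL.range = Ggrp := by
  rw [MonoidHom.range_eq_map, ← closure_range_gen, MonoidHom.map_closure, Ggrp, ← Set.range_comp]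
  congr 1
  ext g
  simp [Units.ext_iff, coe_toGL_gen, eq_comm]

noncomputable def equivGgrp : CliffordMonomial ≃* Ggrp :=
  (MonoidHom.ofInjective toGL_injective).trans (MulEquiv.subgroupCongr range_toGL)

theorem setOf_isConj_mat (w : CliffordMonomial) (u : Ggrp)
    (hu : mat u = toGL w) : {x | ∃ v : Ggrp, IsConj u v ∧ mat v = x} =
      (fun y => (toGL y : Matrix (Fin 4) (Fin 4) ℂ)) '' {y | IsConj w y} := by
  obtain rfl : u = equivGgrp w := Subtype.ext (Units.ext hu)
  change mat '' {v | IsConj (equivGgrp w) v} = _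
  rw [equivGgrp.setOf_isConj, Set.image_image]
  rfl

theorem setOf_isConj_mat_of_ne {w : CliffordMonomial} (h1 : w ≠ 1) (hneg : w ≠ negOne) (u : Ggrp)
    (hu : mat u = toGL w) : {x | ∃ v : Ggrp, IsConj u v ∧ mat v = x} =
      {(toGL w : Matrix (Fin 4) (Fin 4) ℂ), -(toGL w : Matrix (Fin 4) (Fin 4) ℂ)} := by
  rw [setOf_isConj_mat w u hu, setOf_isConj_of_ne h1 hneg, Set.image_pair, map_mul, Units.val_mul,
    coe_toGL_negOne, neg_one_mul]

/-- `G` has exactly 17 conjugacy classes: `{I}`, `{-I}`, the five classes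
`{T m, -T m}` and the ten classes `{T m * T n, -(T m * T n)}` for `m < n`. -/
theorem stmt4 :
    Nat.card (ConjClasses Ggrp) = 17 ∧
    (∀ u : Ggrp, mat u = 1 →
      {x : Matrix (Fin 4) (Fin 4) ℂ | ∃ v : Ggrp, IsConj u v ∧ mat v = x} = {1}) ∧
    (∀ u : Ggrp, mat u = -1 →
      {x : Matrix (Fin 4) (Fin 4) ℂ | ∃ v : Ggrp, IsConj u v ∧ mat v = x} = {-1}) ∧
    (∀ m : Fin 5, ∀ u : Ggrp, mat u = T m →
      {x : Matrix (Fin 4) (Fin 4) ℂ | ∃ v : Ggrp, IsConj u v ∧ mat v = x} = {T m, -(T m)}) ∧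
    (∀ m n : Fin 5, m < n → ∀ u : Ggrp, mat u = T m * T n →
      {x : Matrix (Fin 4) (Fin 4) ℂ | ∃ v : Ggrp, IsConj u v ∧ mat v = x}
        = {T m * T n, -(T m * T n)}) := by
  refine ⟨?_, fun u hu => ?_, fun u hu => ?_, fun m u hu => ?_, fun m n hmn u hu => ?_⟩
  · rw [← card_conjClasses]
    exact Nat.card_congr equivGgrp.conjClassesCongr.symm
  · have hone : {y : CliffordMonomial | IsConj 1 y} = {1} := Set.ext fun _ => isConj_one_right
    rw [setOf_isConj_mat 1 u (by simpa using hu), hone, Set.image_singleton, map_one, Units.val_one]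
  · rw [setOf_isConj_mat negOne u (hu.trans coe_toGL_negOne.symm), setOf_isConj_negOne,
      Set.image_singleton, coe_toGL_negOne]
  · obtain ⟨h1, hneg⟩ := gen_ne m
    rw [setOf_isConj_mat_of_ne h1 hneg u (hu.trans (coe_toGL_gen m).symm), coe_toGL_gen]
  · obtain ⟨h1, hneg⟩ := gen_mul_gen_ne hmn.ne
    have hT : (toGL (gen m * gen n) : Matrix (Fin 4) (Fin 4) ℂ) = T m * T n := by
      rw [map_mul, Units.val_mul, coe_toGL_gen, coe_toGL_gen]
    rw [setOf_isConj_mat_of_ne h1 hneg u (hu.trans hT.symm), hT]
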